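/- arXiv:2605.29642 — 6 statements merged into one kernel-verified Lean document; each statement's English description precedes it below -/
import Mathlib

section
/- Let K ≥ 1, V > 0, C_q ≥ 0, and budgets B_1, …, B_K ≥ 0. Let ξ_1, …, ξ_K be independent square-integrable mean-zero random vectors in ℝ^V such that for each i the coordinates ξ_{i,1}, …, ξ_{i,V} are pairwise uncorrelated with Var(ξ_{i,v}) ≤ C_q · 2^{−2 B_i / V} for every v. Set ξ̄ = (1/K) Σ_{i=1}^K ξ_i. Then for every probability vector p on V tokens, E[ξ̄ᵀ H_soft(p) ξ̄] ≤ (C_q / K²) Σ_{i=1}^K 2^{−2 B_i / V}. -/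
open Finset Matrix MeasureTheory ProbabilityTheory

/-- The softmax Hessian `H_soft(p) = diag(p) - p pᵀ`. -/
noncomputable def Hsoft {V : ℕ} (p : Fin V → ℝ) : Matrix (Fin V) (Fin V) ℝ :=
  Matrix.diagonal p - Matrix.vecMulVec p p

private lemma quad_eq {V : ℕ} (p y : Fin V → ℝ) :
    y ⬝ᵥ (Hsoft p).mulVec y = (∑ v, p v * (y v * y v)) - (∑ v, p v * y v) ^ 2 := by
  rw [Hsoft, Matrix.sub_mulVec, dotProduct_sub]
  congr 1
  · rw [dotProduct]
    refine Finset.sum_congr rfl fun v _ => ?_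
    rw [Matrix.mulVec_diagonal]; ring
  · rw [dotProduct, sq, Finset.sum_mul_sum]
    refine Finset.sum_congr rfl fun v _ => ?_
    have h : (Matrix.vecMulVec p p).mulVec y v = ∑ w, (p v * p w) * y w := by
      simp [Matrix.mulVec, dotProduct, Matrix.vecMulVec_apply]
    rw [h, Finset.mul_sum]
    exact Finset.sum_congr rfl fun w _ => by ring

/-- Heterogeneous-bandwidth dither bound: for independent mean-zero random vectors
`ξ_i` with pairwise uncorrelated coordinates and `Var(ξ_{i,v}) ≤ C_q · 2^{-2B_i/V}`,
the average `ξ̄ = (1/K) Σ_i ξ_i` satisfies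
`E[ξ̄ᵀ H_soft(p) ξ̄] ≤ (C_q/K²) Σ_i 2^{-2B_i/V}` for every probability vector `p`. -/
theorem heterogeneous_bandwidth_quadform_bound {Ω : Type*} [MeasurableSpace Ω]
    (μ : Measure Ω) [IsProbabilityMeasure μ]
    (K V : ℕ) (hK : 1 ≤ K) (hV : 0 < V)
    (Cq : ℝ) (hCq : 0 ≤ Cq)
    (B : Fin K → ℝ) (hB : ∀ i, 0 ≤ B i)
    (ξ : Fin K → Ω → Fin V → ℝ)
    (hmeas : ∀ i, Measurable (ξ i))
    (hindep : iIndepFun ξ μ)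
    (hint : ∀ i j v w, Integrable (fun ω => ξ i ω v * ξ j ω w) μ)
    (hmean : ∀ i v, ∫ ω, ξ i ω v ∂μ = 0)
    (huncorr : ∀ i, ∀ v w, v ≠ w → ∫ ω, ξ i ω v * ξ i ω w ∂μ = 0)
    (hvar : ∀ i v, ∫ ω, (ξ i ω v) ^ 2 ∂μ ≤ Cq * (2 : ℝ) ^ (-(2 * B i) / (V : ℝ)))
    (p : Fin V → ℝ) (hp : ∀ v, 0 ≤ p v) (hsum : ∑ v, p v = 1) :
    (∫ ω, (fun v => (1 / (K : ℝ)) * ∑ i, ξ i ω v) ⬝ᵥ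
        (Hsoft p).mulVec (fun v => (1 / (K : ℝ)) * ∑ i, ξ i ω v) ∂μ)
      ≤ (Cq / (K : ℝ) ^ 2) * ∑ i, (2 : ℝ) ^ (-(2 * B i) / (V : ℝ)) := by
  set x : Ω → Fin V → ℝ := fun ω v => (1 / (K : ℝ)) * ∑ i, ξ i ω v with hx
  have hprod : ∀ (ω : Ω) (v w : Fin V),
      x ω v * x ω w = (1 / (K : ℝ)) ^ 2 * ∑ i, ∑ j, ξ i ω v * ξ j ω w := by
    intro ω v w
    simp only [hx]
    rw [mul_mul_mul_comm, Finset.sum_mul_sum]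
    ring
  -- integrability of products of coordinates of x
  have hxx : ∀ v w, Integrable (fun ω => x ω v * x ω w) μ := by
    intro v w
    have h1 : (fun ω => x ω v * x ω w)
        = fun ω => (1 / (K : ℝ)) ^ 2 * ∑ i, ∑ j, ξ i ω v * ξ j ω w :=
      funext fun ω => hprod ω v w
    rw [h1]
    exact (integrable_finset_sum _ fun i _ =>
      integrable_finset_sum _ fun j _ => hint i j v w).const_mul _
  have hg : Integrable (fun ω => ∑ v, p v * (x ω v * x ω v)) μ :=
    integrable_finset_sum _ fun v _ => (hxx v v).const_mul _
  have hS : Integrable (fun ω => (∑ v, p v * x ω v) ^ 2) μ := by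
    have h2 : (fun ω => (∑ v, p v * x ω v) ^ 2)
        = fun ω => ∑ v, ∑ w, (p v * p w) * (x ω v * x ω w) := by
      funext ω
      rw [sq, Finset.sum_mul_sum]
      exact Finset.sum_congr rfl fun v _ => Finset.sum_congr rfl fun w _ => by ring
    rw [h2]
    exact integrable_finset_sum _ fun v _ =>
      integrable_finset_sum _ fun w _ => ((hxx v w).const_mul _)
  -- bound the integral by the diagonal term
  have hle : (∫ ω, (fun v => (1 / (K : ℝ)) * ∑ i, ξ i ω v) ⬝ᵥ
      (Hsoft p).mulVec (fun v => (1 / (K : ℝ)) * ∑ i, ξ i ω v) ∂μ)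
      ≤ ∫ ω, ∑ v, p v * (x ω v * x ω v) ∂μ := by
    have heq : (fun ω => (fun v => (1 / (K : ℝ)) * ∑ i, ξ i ω v) ⬝ᵥ
        (Hsoft p).mulVec (fun v => (1 / (K : ℝ)) * ∑ i, ξ i ω v))
        = fun ω => (∑ v, p v * (x ω v * x ω v)) - (∑ v, p v * x ω v) ^ 2 :=
      funext fun ω => quad_eq p (x ω)
    rw [heq]
    refine integral_mono (hg.sub hS) hg fun ω => ?_
    simp only
    nlinarith [sq_nonneg (∑ v, p v * x ω v)]
  refine hle.trans ?_
  -- compute ∫ x v ^ 2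
  have hxv : ∀ v, ∫ ω, x ω v * x ω v ∂μ
      ≤ (1 / (K : ℝ)) ^ 2 * ∑ i, Cq * (2 : ℝ) ^ (-(2 * B i) / (V : ℝ)) := by
    intro v
    have h1 : (fun ω => x ω v * x ω v)
        = fun ω => (1 / (K : ℝ)) ^ 2 * ∑ i, ∑ j, ξ i ω v * ξ j ω v :=
      funext fun ω => hprod ω v v
    rw [h1, integral_const_mul, integral_finset_sum _ fun i _ =>
      integrable_finset_sum _ fun j _ => hint i j v v]
    have hcross : ∀ i, (∫ ω, ∑ j, ξ i ω v * ξ j ω v ∂μ) = ∫ ω, ξ i ω v * ξ i ω v ∂μ := by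
      intro i
      rw [integral_finset_sum _ fun j _ => hint i j v v]
      rw [Finset.sum_eq_single i]
      · intro j _ hji
        have hij : IndepFun (fun ω => ξ i ω v) (fun ω => ξ j ω v) μ :=
          (hindep.indepFun (Ne.symm hji)).comp (measurable_pi_apply v) (measurable_pi_apply v)
        have h0 : (∫ ω, ξ i ω v * ξ j ω v ∂μ)
            = (∫ ω, ξ i ω v ∂μ) * ∫ ω, ξ j ω v ∂μ :=
          hij.integral_fun_mul_eq_mul_integral (((measurable_pi_apply v).comp (hmeas i)).aestronglyMeasurable)
            (((measurable_pi_apply v).comp (hmeas j)).aestronglyMeasurable)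
        rw [h0, hmean i v, zero_mul]
      · intro h
        exact absurd (Finset.mem_univ i) h
    have hbound : (∑ i, ∫ ω, ∑ j, ξ i ω v * ξ j ω v ∂μ)
        ≤ ∑ i, Cq * (2 : ℝ) ^ (-(2 * B i) / (V : ℝ)) := by
      refine Finset.sum_le_sum fun i _ => ?_
      rw [hcross i]
      calc (∫ ω, ξ i ω v * ξ i ω v ∂μ) = ∫ ω, (ξ i ω v) ^ 2 ∂μ := by
            congr 1; funext ω; ring
        _ ≤ Cq * (2 : ℝ) ^ (-(2 * B i) / (V : ℝ)) := hvar i v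
    exact mul_le_mul_of_nonneg_left hbound (sq_nonneg _)
  -- conclude
  have hKpos : (0 : ℝ) < (K : ℝ) := by exact_mod_cast Nat.lt_of_lt_of_le Nat.zero_lt_one hK
  rw [integral_finset_sum _ fun v _ => (hxx v v).const_mul _]
  calc (∑ v, ∫ ω, p v * (x ω v * x ω v) ∂μ)
      = ∑ v, p v * ∫ ω, x ω v * x ω v ∂μ := by
        refine Finset.sum_congr rfl fun v _ => integral_const_mul _ _
    _ ≤ ∑ v, p v * ((1 / (K : ℝ)) ^ 2 * ∑ i, Cq * (2 : ℝ) ^ (-(2 * B i) / (V : ℝ))) :=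
        Finset.sum_le_sum fun v _ => mul_le_mul_of_nonneg_left (hxv v) (hp v)
    _ = (Cq / (K : ℝ) ^ 2) * ∑ i, (2 : ℝ) ^ (-(2 * B i) / (V : ℝ)) := by
        rw [← Finset.sum_mul, hsum, one_mul, Finset.mul_sum, Finset.mul_sum]
        refine Finset.sum_congr rfl fun i _ => ?_
        field_simp
end

section
/- Fix K ≥ 1, V > 0, weights w_1, …, w_K > 0, and a total budget B_tot ∈ ℝ. The water-filling allocation B_i* = B_tot/K + (V/2)·log₂(w_i/w̄_g) satisfies Σ_{i=1}^K B_i* = B_tot, and for every (B_1, …, B_K) ∈ ℝ^K with Σ_{i=1}^K B_i = B_tot, F(B_1, …, B_K) ≥ F(B_1*, …, B_K*) = (w̄_g/K) · 2^{−2 B_tot/(K V)}. Moreover, when all w_i are equal, B_i* = B_tot/K for every i. -/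
open Finset

/-- Optimal bandwidth allocation: the water-filling allocation
`B_i* = B_tot/K + (V/2)·log₂(w_i/w̄_g)` sums to `B_tot`, minimizes the allocation
objective `F(B) = (1/K²) Σ_i w_i 2^{-2B_i/V}` over all allocations with total `B_tot`,
attains `F(B*) = (w̄_g/K) · 2^{-2B_tot/(KV)}`, and is uniform when all weights agree. -/
theorem waterfilling_optimal_allocation (K : ℕ) (hK : 1 ≤ K)
    (V : ℝ) (hV : 0 < V)
    (w : Fin K → ℝ) (hw : ∀ i, 0 < w i) (Btot : ℝ)
    (wg : ℝ) (hwg : wg = (∏ j, w j) ^ ((K : ℝ)⁻¹))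
    (Bstar : Fin K → ℝ)
    (hBstar : ∀ i, Bstar i = Btot / K + (V / 2) * Real.logb 2 (w i / wg))
    (F : (Fin K → ℝ) → ℝ)
    (hF : ∀ Bv : Fin K → ℝ,
      F Bv = (1 / (K : ℝ) ^ 2) * ∑ i, w i * (2 : ℝ) ^ (-(2 * Bv i) / V)) :
    (∑ i, Bstar i = Btot) ∧
    (∀ Bv : Fin K → ℝ, ∑ i, Bv i = Btot → F Bstar ≤ F Bv) ∧
    F Bstar = (wg / K) * (2 : ℝ) ^ (-(2 * Btot) / (K * V)) ∧
    ((∀ i j, w i = w j) → ∀ i, Bstar i = Btot / K) := by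
  have hKpos : (0:ℝ) < K := by exact_mod_cast hK
  have hKne : (K:ℝ) ≠ 0 := ne_of_gt hKpos
  have hP : (0:ℝ) < ∏ j, w j := Finset.prod_pos fun i _ => hw i
  have hwgpos : 0 < wg := by rw [hwg]; exact Real.rpow_pos_of_pos hP _
  have hlog2 : Real.log 2 ≠ 0 := ne_of_gt (Real.log_pos (by norm_num))
  have hlogwg : Real.log wg = (K:ℝ)⁻¹ * Real.log (∏ j, w j) := by
    rw [hwg, Real.log_rpow hP]
  set c : ℝ := (2:ℝ) ^ (-(2 * Btot) / (K * V)) with hc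
  -- key pointwise identity
  have hkey : ∀ i, w i * (2:ℝ) ^ (-(2 * Bstar i) / V) = wg * c := by
    intro i
    have hwi := hw i
    have hwiwg : 0 < w i / wg := div_pos hwi hwgpos
    have hexp : -(2 * Bstar i) / V = -(2 * Btot) / (K * V) + (- Real.logb 2 (w i / wg)) := by
      rw [hBstar i]; field_simp; ring
    rw [hexp, Real.rpow_add (by norm_num : (0:ℝ) < 2), Real.rpow_neg (by norm_num),
      Real.rpow_logb (by norm_num) (by norm_num) hwiwg]
    rw [hc]
    field_simp
  -- sum of Bstar
  have hsum : ∑ i, Bstar i = Btot := by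
    have e : ∀ i : Fin K, Bstar i
        = Btot / K + (V / 2 / Real.log 2) * (Real.log (w i) - Real.log wg) := by
      intro i
      rw [hBstar i, Real.logb, Real.log_div (ne_of_gt (hw i)) (ne_of_gt hwgpos)]
      ring
    rw [Finset.sum_congr rfl fun i _ => e i, Finset.sum_add_distrib, ← Finset.mul_sum,
      Finset.sum_sub_distrib, ← Real.log_prod (fun i _ => ne_of_gt (hw i)),
      Finset.sum_const]
    simp only [Finset.card_univ, Fintype.card_fin, nsmul_eq_mul, hlogwg]
    simp only [Finset.sum_const, Finset.card_univ, Fintype.card_fin, nsmul_eq_mul]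
    field_simp
    ring
  refine ⟨hsum, ?_, ?_, ?_⟩
  · -- optimality via AM-GM
    intro Bv hBv
    rw [hF, hF]
    have hz : ∀ i, (0:ℝ) < w i * (2:ℝ) ^ (-(2 * Bv i) / V) := fun i =>
      mul_pos (hw i) (Real.rpow_pos_of_pos (by norm_num) _)
    have hamgm := Real.geom_mean_le_arith_mean_weighted Finset.univ
      (fun _ : Fin K => (K:ℝ)⁻¹) (fun i => w i * (2:ℝ) ^ (-(2 * Bv i) / V))
      (fun i _ => by positivity) (by simp [Finset.card_univ]; field_simp)
      (fun i _ => le_of_lt (hz i))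
    have hprod : ∏ i : Fin K, (w i * (2:ℝ) ^ (-(2 * Bv i) / V)) ^ ((K:ℝ)⁻¹)
        = wg * c := by
      rw [Real.finset_prod_rpow _ _ (fun i _ => le_of_lt (hz i))]
      rw [Finset.prod_mul_distrib, ← Real.rpow_sum_of_pos (by norm_num : (0:ℝ) < 2)]
      have hS : ∑ i, -(2 * Bv i) / V = -(2 * Btot) / V := by
        rw [← hBv, Finset.mul_sum, neg_div, Finset.sum_div, ← Finset.sum_neg_distrib]
        simp [neg_div]
      rw [hS, Real.mul_rpow (le_of_lt hP) (Real.rpow_nonneg (by norm_num) _), ← hwg,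
        ← Real.rpow_mul (by norm_num : (0:ℝ) ≤ 2)]
      congr 1
      rw [hc]
      congr 1
      rw [← one_div, div_mul_div_comm, mul_one, mul_comm V (K:ℝ)]
    rw [hprod] at hamgm
    have hsumStar : ∑ i, w i * (2:ℝ) ^ (-(2 * Bstar i) / V) = K * (wg * c) := by
      rw [Finset.sum_congr rfl fun i _ => hkey i]
      simp [Finset.card_univ]
    rw [hsumStar]
    have h2 : ∑ i : Fin K, (K:ℝ)⁻¹ * (w i * (2:ℝ) ^ (-(2 * Bv i) / V))
        = (K:ℝ)⁻¹ * ∑ i, w i * (2:ℝ) ^ (-(2 * Bv i) / V) := by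
      rw [Finset.mul_sum]
    rw [h2] at hamgm
    have : (K:ℝ) * (wg * c) ≤ ∑ i, w i * (2:ℝ) ^ (-(2 * Bv i) / V) := by
      rw [← mul_le_mul_iff_right₀ (show (0:ℝ) < (K:ℝ)⁻¹ by positivity)]
      calc (K:ℝ)⁻¹ * ((K:ℝ) * (wg * c)) = wg * c := by field_simp
        _ ≤ _ := hamgm
    have hsq : (0:ℝ) < 1 / (K:ℝ)^2 := by positivity
    exact mul_le_mul_of_nonneg_left this (le_of_lt hsq)
  · rw [hF]
    rw [Finset.sum_congr rfl fun i _ => hkey i]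
    simp [Finset.card_univ]
    field_simp
  · intro heq i
    have : ∏ j, w j = (w i) ^ K := by
      rw [Finset.prod_congr rfl fun j _ => heq j i]
      simp [Finset.card_univ]
    have hwgi : wg = w i := by
      rw [hwg, this, ← Real.rpow_natCast (w i) K, ← Real.rpow_mul (hw i).le]
      rw [mul_inv_cancel₀ hKne, Real.rpow_one]
    rw [hBstar i, hwgi, div_self (ne_of_gt (hw i))]
    simp
end

section
/- Fix K ≥ 1, V > 0, B_tot ∈ ℝ, weights w_1, …, w_K > 0 and estimated weights ŵ_1, …, ŵ_K > 0. Let B* and B̂* be the water-filling allocations computed from w and from ŵ respectively, and let ŵ_g = (∏_j ŵ_j)^{1/K}. Then F(B̂*) = (ŵ_g · 2^{−2 B_tot/(K V)} / K²) · Σ_{i=1}^K (w_i/ŵ_i), and consequently F(B̂*)/F(B*) = (1/K) Σ_{i=1}^K (w_i/ŵ_i)·(ŵ_g/w̄_g). -/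
open Finset

/-!
Writing `B_i = B_tot/K + (V/2) log₂(a_i/g)`, the factor `2^{-2B_i/V}` collapses to
`2^{-2B_tot/(KV)} · g/a_i`. Hence `F(B̂*)` is that constant times `ŵ_g Σ w_i/ŵ_i / K²`, and for the
exact allocation every summand `w_i · w̄_g/w_i` equals `w̄_g`, so `F(B*) = 2^{-2B_tot/(KV)} w̄_g / K`.
-/

lemma rpow_neg_two_mul_add_half_mul_logb {b V x : ℝ} (hb : 0 < b) (hb1 : b ≠ 1) (hV : V ≠ 0)
    (hx : 0 < x) (t : ℝ) :
    b ^ (-(2 * (t + V / 2 * Real.logb b x)) / V) = b ^ (-(2 * t) / V) * x⁻¹ := by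
  have hexp : -(2 * (t + V / 2 * Real.logb b x)) / V = -(2 * t) / V + -Real.logb b x := by
    field_simp
    ring
  rw [hexp, Real.rpow_add hb, Real.rpow_neg hb.le, Real.rpow_logb hb hb1 hx]

lemma sum_mul_rpow_neg_two_mul_waterFilling {ι : Type*} [Fintype ι] {b V g t : ℝ}
    (hb : 0 < b) (hb1 : b ≠ 1) (hV : V ≠ 0) (hg : 0 < g) (w a B : ι → ℝ) (ha : ∀ i, 0 < a i)
    (hB : ∀ i, B i = t + V / 2 * Real.logb b (a i / g)) :
    ∑ i, w i * b ^ (-(2 * B i) / V) = b ^ (-(2 * t) / V) * g * ∑ i, w i / a i := by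
  rw [mul_sum]
  refine sum_congr rfl fun i _ => ?_
  rw [hB i, rpow_neg_two_mul_add_half_mul_logb hb hb1 hV (div_pos (ha i) hg), inv_div]
  ring

/-- Plug-in objective identity: with `B̂*` the water-filling allocation computed from
estimated weights `ŵ` and `F` evaluated with the true weights `w`,
`F(B̂*) = (ŵ_g · 2^{-2B_tot/(KV)}/K²) Σ_i w_i/ŵ_i` and
`F(B̂*)/F(B*) = (1/K) Σ_i (w_i/ŵ_i)(ŵ_g/w̄_g)`. -/
theorem plugin_allocation_objective_identity (K : ℕ) (hK : 1 ≤ K)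
    (V : ℝ) (hV : 0 < V) (Btot : ℝ)
    (w what : Fin K → ℝ) (hw : ∀ i, 0 < w i) (hwhat : ∀ i, 0 < what i)
    (wg whatg : ℝ)
    (hwg : wg = (∏ j, w j) ^ ((K : ℝ)⁻¹))
    (hwhatg : whatg = (∏ j, what j) ^ ((K : ℝ)⁻¹))
    (Bstar Bhat : Fin K → ℝ)
    (hBstar : ∀ i, Bstar i = Btot / K + (V / 2) * Real.logb 2 (w i / wg))
    (hBhat : ∀ i, Bhat i = Btot / K + (V / 2) * Real.logb 2 (what i / whatg))
    (F : (Fin K → ℝ) → ℝ)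
    (hF : ∀ Bv : Fin K → ℝ,
      F Bv = (1 / (K : ℝ) ^ 2) * ∑ i, w i * (2 : ℝ) ^ (-(2 * Bv i) / V)) :
    F Bhat = (whatg * (2 : ℝ) ^ (-(2 * Btot) / (K * V)) / (K : ℝ) ^ 2) *
        ∑ i, w i / what i ∧
    F Bhat / F Bstar = (1 / (K : ℝ)) * ∑ i, (w i / what i) * (whatg / wg) := by
  have hK0 : (K : ℝ) ≠ 0 := by positivity
  have hwg0 : 0 < wg := hwg ▸ Real.rpow_pos_of_pos (prod_pos fun i _ => hw i) _
  have hwhatg0 : 0 < whatg := hwhatg ▸ Real.rpow_pos_of_pos (prod_pos fun i _ => hwhat i) _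
  have hexp : -(2 * (Btot / K)) / V = -(2 * Btot) / (K * V) := by ring
  have hc0 : 0 < (2 : ℝ) ^ (-(2 * Btot) / (K * V)) := by positivity
  have hFhat := hF Bhat
  have hFstar := hF Bstar
  rw [sum_mul_rpow_neg_two_mul_waterFilling two_pos (by norm_num) hV.ne' hwhatg0 w what Bhat
    hwhat hBhat, hexp] at hFhat
  rw [sum_mul_rpow_neg_two_mul_waterFilling two_pos (by norm_num) hV.ne' hwg0 w w Bstar
    hw hBstar, hexp, sum_congr rfl fun i _ => div_self (hw i).ne', sum_const, card_univ,
    Fintype.card_fin, nsmul_one] at hFstar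
  refine ⟨by rw [hFhat]; ring, ?_⟩
  rw [hFhat, hFstar, ← sum_mul]
  field_simp
end

section
/- Fix K ≥ 1, V > 0, B_tot ∈ ℝ, and weights w_1, …, w_K > 0 and ŵ_1, …, ŵ_K > 0 satisfying |ŵ_i − w_i| ≤ η w_i for all i, for some η ∈ [0, 1/2]. Let B* and B̂* be the water-filling allocations computed from w and from ŵ respectively. Then F(B̂*) ≤ (1 + 2η + 4η²) · F(B*). -/
open Finset

/-- Relative-error transfer: if `|ŵ_i - w_i| ≤ η w_i` for all `i` with `η ∈ [0, 1/2]`,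
then the plug-in water-filling allocation satisfies
`F(B̂*) ≤ (1 + 2η + 4η²) F(B*)`. -/
theorem relative_error_transfer (K : ℕ) (hK : 1 ≤ K)
    (V : ℝ) (hV : 0 < V) (Btot : ℝ)
    (w what : Fin K → ℝ) (hw : ∀ i, 0 < w i) (hwhat : ∀ i, 0 < what i)
    (η : ℝ) (hη0 : 0 ≤ η) (hη : η ≤ 1 / 2)
    (herr : ∀ i, |what i - w i| ≤ η * w i)
    (wg whatg : ℝ)
    (hwg : wg = (∏ j, w j) ^ ((K : ℝ)⁻¹))
    (hwhatg : whatg = (∏ j, what j) ^ ((K : ℝ)⁻¹))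
    (Bstar Bhat : Fin K → ℝ)
    (hBstar : ∀ i, Bstar i = Btot / K + (V / 2) * Real.logb 2 (w i / wg))
    (hBhat : ∀ i, Bhat i = Btot / K + (V / 2) * Real.logb 2 (what i / whatg))
    (F : (Fin K → ℝ) → ℝ)
    (hF : ∀ Bv : Fin K → ℝ,
      F Bv = (1 / (K : ℝ) ^ 2) * ∑ i, w i * (2 : ℝ) ^ (-(2 * Bv i) / V)) :
    F Bhat ≤ (1 + 2 * η + 4 * η ^ 2) * F Bstar := by
  have hK0 : (0:ℝ) < K := by exact_mod_cast hK
  have hKne : (K:ℝ) ≠ 0 := ne_of_gt hK0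
  have hVne : V ≠ 0 := ne_of_gt hV
  set a := Btot / K with ha
  set c := (2:ℝ) ^ (-(2*a)/V) with hc
  have hcpos : 0 < c := Real.rpow_pos_of_pos (by norm_num) _
  have hwgpos : 0 < wg := by
    rw [hwg]; exact Real.rpow_pos_of_pos (Finset.prod_pos fun j _ => hw j) _
  have hwhatgpos : 0 < whatg := by
    rw [hwhatg]; exact Real.rpow_pos_of_pos (Finset.prod_pos fun j _ => hwhat j) _
  have key : ∀ t : ℝ, 0 < t →
      (2:ℝ) ^ (-(2 * (a + V/2 * Real.logb 2 t)) / V) = c * t⁻¹ := by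
    intro t ht
    have hexp : -(2 * (a + V/2 * Real.logb 2 t)) / V
        = -(2*a)/V + (- Real.logb 2 t) := by
      field_simp; ring
    rw [hexp, Real.rpow_add (by norm_num), Real.rpow_neg (by norm_num),
      Real.rpow_logb (by norm_num) (by norm_num) ht]
  -- sum for Bstar
  have hsum2 : ∑ i, w i * (2:ℝ) ^ (-(2 * Bstar i) / V) = K * (c * wg) := by
    have : ∀ i : Fin K, w i * (2:ℝ) ^ (-(2 * Bstar i) / V) = c * wg := by
      intro i
      rw [hBstar i, key _ (div_pos (hw i) hwgpos)]
      rw [inv_div]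
      field_simp [(hw i).ne']
    rw [Finset.sum_congr rfl fun i _ => this i, Finset.sum_const,
      Finset.card_univ, Fintype.card_fin, nsmul_eq_mul]
  -- termwise bound for Bhat
  have hgeo : whatg ≤ (1 + η) * wg := by
    have hprod : ∏ j, what j ≤ (1 + η) ^ K * ∏ j, w j := by
      have : ∏ j, what j ≤ ∏ j, (1 + η) * w j := by
        apply Finset.prod_le_prod (fun j _ => (hwhat j).le)
        intro j _
        have := (abs_le.mp (herr j)).2
        nlinarith [hw j]
      simpa [Finset.prod_mul_distrib, Finset.prod_const, Finset.card_univ] using this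
    calc whatg = (∏ j, what j) ^ ((K : ℝ)⁻¹) := hwhatg
      _ ≤ ((1 + η) ^ K * ∏ j, w j) ^ ((K : ℝ)⁻¹) := by
          apply Real.rpow_le_rpow (Finset.prod_pos fun j _ => hwhat j).le hprod
          positivity
      _ = (1 + η) * wg := by
          rw [Real.mul_rpow (by positivity) (Finset.prod_pos fun j _ => hw j).le,
            ← Real.rpow_natCast (1 + η) K, ← Real.rpow_mul (by positivity),
            mul_inv_cancel₀ hKne, Real.rpow_one, hwg]
  have hterm : ∀ i : Fin K, w i * (2:ℝ) ^ (-(2 * Bhat i) / V)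
      ≤ c * ((1 + 2 * η + 4 * η ^ 2) * wg) := by
    intro i
    rw [hBhat i, key _ (div_pos (hwhat i) hwhatgpos), inv_div]
    have hlow : (1 - η) * w i ≤ what i := by
      have := (abs_le.mp (herr i)).1
      nlinarith
    have h1 : w i * (whatg / what i) ≤ (1 + 2 * η + 4 * η ^ 2) * wg := by
      have hratio : w i / what i ≤ 1 / (1 - η) := by
        rw [div_le_div_iff₀ (hwhat i) (by linarith)]
        nlinarith
      have hq : (1 + η) / (1 - η) ≤ 1 + 2 * η + 4 * η ^ 2 := by
        rw [div_le_iff₀ (by linarith)]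
        nlinarith
      calc w i * (whatg / what i) ≤ w i * ((1 + η) * wg / what i) := by
            gcongr <;> first | exact (hw i).le | exact (hwhat i).le
        _ = (1 + η) * wg * (w i / what i) := by ring
        _ ≤ (1 + η) * wg * (1 / (1 - η)) := by
            apply mul_le_mul_of_nonneg_left hratio (by positivity)
        _ = (1 + η) / (1 - η) * wg := by ring
        _ ≤ (1 + 2 * η + 4 * η ^ 2) * wg := by
            exact mul_le_mul_of_nonneg_right hq hwgpos.le
    calc w i * (c * (whatg / what i)) = c * (w i * (whatg / what i)) := by ring
      _ ≤ c * ((1 + 2 * η + 4 * η ^ 2) * wg) :=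
          mul_le_mul_of_nonneg_left h1 hcpos.le
  have hsum1 : ∑ i, w i * (2:ℝ) ^ (-(2 * Bhat i) / V)
      ≤ K * (c * ((1 + 2 * η + 4 * η ^ 2) * wg)) := by
    calc ∑ i, w i * (2:ℝ) ^ (-(2 * Bhat i) / V)
        ≤ ∑ _i : Fin K, c * ((1 + 2 * η + 4 * η ^ 2) * wg) :=
          Finset.sum_le_sum fun i _ => hterm i
      _ = K * (c * ((1 + 2 * η + 4 * η ^ 2) * wg)) := by
          rw [Finset.sum_const, Finset.card_univ, Fintype.card_fin, nsmul_eq_mul]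
  rw [hF Bhat, hF Bstar, hsum2]
  have hpos : (0:ℝ) < 1 / (K:ℝ)^2 := by positivity
  calc (1 / (K:ℝ)^2) * ∑ i, w i * (2:ℝ) ^ (-(2 * Bhat i) / V)
      ≤ (1 / (K:ℝ)^2) * (K * (c * ((1 + 2 * η + 4 * η ^ 2) * wg))) :=
        mul_le_mul_of_nonneg_left hsum1 hpos.le
    _ = (1 + 2 * η + 4 * η ^ 2) * ((1 / (K:ℝ)^2) * (K * (c * wg))) := by ring
end

section
/- Fix K ≥ 1, V > 0, B_tot ∈ ℝ, and weights w_1, …, w_K > 0 with w_min = min_i w_i > 0. Suppose estimated weights ŵ_1, …, ŵ_K satisfy |ŵ_i − w_i| ≤ ε for all i, for some ε with 0 ≤ ε ≤ w_min/4. Let B* and B̂* be the water-filling allocations computed from w and from ŵ respectively. Then ŵ_i > 0 for all i and F(B̂*) ≤ (1 + 3ε/w_min) · F(B*). -/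
open Finset

/-- Additive-error transfer: if `|ŵ_i - w_i| ≤ ε` for all `i` with
`0 ≤ ε ≤ w_min/4` where `w_min = min_i w_i > 0`, then the plug-in water-filling
allocation satisfies `ŵ_i > 0` for all `i` and `F(B̂*) ≤ (1 + 3ε/w_min) F(B*)`. -/
theorem additive_error_transfer (K : ℕ) (hK : 1 ≤ K)
    (V : ℝ) (hV : 0 < V) (Btot : ℝ)
    (w what : Fin K → ℝ) (hw : ∀ i, 0 < w i)
    (wmin : ℝ) (hwmin : IsLeast {x | ∃ i, x = w i} wmin) (hwminpos : 0 < wmin)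
    (ε : ℝ) (hε0 : 0 ≤ ε) (hε : ε ≤ wmin / 4)
    (herr : ∀ i, |what i - w i| ≤ ε)
    (wg whatg : ℝ)
    (hwg : wg = (∏ j, w j) ^ ((K : ℝ)⁻¹))
    (hwhatg : whatg = (∏ j, what j) ^ ((K : ℝ)⁻¹))
    (Bstar Bhat : Fin K → ℝ)
    (hBstar : ∀ i, Bstar i = Btot / K + (V / 2) * Real.logb 2 (w i / wg))
    (hBhat : ∀ i, Bhat i = Btot / K + (V / 2) * Real.logb 2 (what i / whatg))
    (F : (Fin K → ℝ) → ℝ)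
    (hF : ∀ Bv : Fin K → ℝ,
      F Bv = (1 / (K : ℝ) ^ 2) * ∑ i, w i * (2 : ℝ) ^ (-(2 * Bv i) / V)) :
    (∀ i, 0 < what i) ∧ F Bhat ≤ (1 + 3 * ε / wmin) * F Bstar := by
  have hK0 : (0:ℝ) < K := by exact_mod_cast hK
  have hKne : (K:ℝ) ≠ 0 := ne_of_gt hK0
  set t : ℝ := ε / wmin with ht
  have ht0 : 0 ≤ t := div_nonneg hε0 hwminpos.le
  have ht4 : t ≤ 1/4 := by
    rw [ht, div_le_iff₀ hwminpos]; linarith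
  have hεt : ε = t * wmin := by rw [ht, div_mul_cancel₀ _ hwminpos.ne']
  have hle : ∀ i, wmin ≤ w i := fun i => hwmin.2 ⟨i, rfl⟩
  have h1t : (0:ℝ) < 1 - t := by linarith
  have hlow : ∀ i, (1 - t) * w i ≤ what i := by
    intro i
    have h1 := (abs_le.mp (herr i)).1
    have h2 : t * wmin ≤ t * w i := mul_le_mul_of_nonneg_left (hle i) ht0
    nlinarith [hw i]
  have hup : ∀ i, what i ≤ (1 + t) * w i := by
    intro i
    have h1 := (abs_le.mp (herr i)).2
    have h2 : t * wmin ≤ t * w i := mul_le_mul_of_nonneg_left (hle i) ht0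
    nlinarith [hw i]
  have hwhatpos : ∀ i, 0 < what i := fun i =>
    lt_of_lt_of_le (mul_pos h1t (hw i)) (hlow i)
  refine ⟨hwhatpos, ?_⟩
  have hPw : 0 < ∏ j, w j := Finset.prod_pos fun j _ => hw j
  have hPwhat : 0 < ∏ j, what j := Finset.prod_pos fun j _ => hwhatpos j
  have hwgpos : 0 < wg := hwg ▸ Real.rpow_pos_of_pos hPw _
  have hwhatgpos : 0 < whatg := hwhatg ▸ Real.rpow_pos_of_pos hPwhat _
  have hprodle : ∏ j, what j ≤ (1+t)^K * ∏ j, w j := by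
    have : ∏ j, what j ≤ ∏ j, (1+t) * w j :=
      Finset.prod_le_prod (fun j _ => (hwhatpos j).le) (fun j _ => hup j)
    simpa [Finset.prod_mul_distrib, Finset.prod_const, Finset.card_univ] using this
  have hwhatg_le : whatg ≤ (1+t) * wg := by
    rw [hwhatg, hwg]
    calc (∏ j, what j) ^ ((K:ℝ)⁻¹)
        ≤ ((1+t)^K * ∏ j, w j) ^ ((K:ℝ)⁻¹) :=
          Real.rpow_le_rpow hPwhat.le hprodle (by positivity)
      _ = (1+t) * (∏ j, w j) ^ ((K:ℝ)⁻¹) := by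
          rw [Real.mul_rpow (by positivity) hPw.le,
            ← Real.rpow_natCast (1+t) K, ← Real.rpow_mul (by positivity),
            mul_inv_cancel₀ hKne, Real.rpow_one]
  set C : ℝ := (2:ℝ) ^ (-(2*Btot)/((K:ℝ)*V)) with hC
  have hCpos : 0 < C := Real.rpow_pos_of_pos two_pos _
  have key : ∀ (r : ℝ), 0 < r →
      (2:ℝ) ^ (-(2 * (Btot/(K:ℝ) + (V/2) * Real.logb 2 r)) / V) = C * r⁻¹ := by
    intro r hr
    have hexp : -(2 * (Btot/(K:ℝ) + (V/2) * Real.logb 2 r)) / V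
        = -(2*Btot)/((K:ℝ)*V) + (-(Real.logb 2 r)) := by
      field_simp
      ring
    rw [hexp, Real.rpow_add two_pos, hC,
      Real.rpow_neg (by norm_num : (0:ℝ) ≤ 2),
      Real.rpow_logb two_pos (by norm_num) hr]
  have hFhat : F Bhat = C / (K:ℝ)^2 * (whatg * ∑ i, w i / what i) := by
    rw [hF]
    have hterm : ∀ i : Fin K, w i * (2:ℝ) ^ (-(2 * Bhat i)/V)
        = whatg * (w i / what i) * C := by
      intro i
      rw [hBhat i, key _ (div_pos (hwhatpos i) hwhatgpos)]
      rw [inv_div]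
      field_simp
    simp only [hterm]
    rw [← Finset.sum_mul, ← Finset.mul_sum]
    ring
  have hFstar : F Bstar = C / (K:ℝ)^2 * (wg * K) := by
    rw [hF]
    have hterm : ∀ i : Fin K, w i * (2:ℝ) ^ (-(2 * Bstar i)/V) = wg * C := by
      intro i
      rw [hBstar i, key _ (div_pos (hw i) hwgpos), inv_div]
      field_simp [(hw i).ne']
    simp only [hterm]
    rw [Finset.sum_const, Finset.card_univ, Fintype.card_fin, nsmul_eq_mul]
    ring
  have hsum_le : ∑ i, w i / what i ≤ (K:ℝ) / (1 - t) := by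
    have : ∀ i : Fin K, w i / what i ≤ 1 / (1 - t) := by
      intro i
      rw [div_le_div_iff₀ (hwhatpos i) h1t]
      nlinarith [hlow i]
    calc ∑ i, w i / what i ≤ ∑ _i : Fin K, 1 / (1 - t) :=
          Finset.sum_le_sum fun i _ => this i
      _ = (K:ℝ) / (1 - t) := by
          rw [Finset.sum_const, Finset.card_univ, Fintype.card_fin, nsmul_eq_mul]
          ring
  have hsum_nonneg : 0 ≤ ∑ i, w i / what i :=
    Finset.sum_nonneg fun i _ => div_nonneg (hw i).le (hwhatpos i).le
  have h3t : 3 * ε / wmin = 3 * t := by rw [ht]; ring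
  rw [hFhat, hFstar, h3t]
  have hCK : 0 ≤ C / (K:ℝ)^2 := by positivity
  have hstep : whatg * ∑ i, w i / what i ≤ ((1+t) * wg) * ((K:ℝ) / (1-t)) := by
    apply mul_le_mul hwhatg_le hsum_le hsum_nonneg
    positivity
  have hfrac : ((1+t) * wg) * ((K:ℝ) / (1-t)) ≤ (1 + 3*t) * (wg * K) := by
    rw [← mul_div_assoc, div_le_iff₀ h1t]
    have h4 : 0 ≤ t * (1 - 3*t) := mul_nonneg ht0 (by linarith)
    nlinarith [mul_nonneg (mul_nonneg hwgpos.le hK0.le) h4]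
  calc C / (K:ℝ)^2 * (whatg * ∑ i, w i / what i)
      ≤ C / (K:ℝ)^2 * (((1+t) * wg) * ((K:ℝ) / (1-t))) :=
        mul_le_mul_of_nonneg_left hstep hCK
    _ ≤ C / (K:ℝ)^2 * ((1 + 3*t) * (wg * K)) :=
        mul_le_mul_of_nonneg_left hfrac hCK
    _ = (1 + 3*t) * (C / (K:ℝ)^2 * (wg * K)) := by ring
end

section
/- There exists an absolute constant C > 0 such that the following holds for every V ≥ 1 and every ℓ ∈ ℝ^V with p = softmax(ℓ): if η is a random vector in ℝ^V with E[η] = 0 and ‖η‖_∞ ≤ 1 almost surely, then | E[ KL(softmax(ℓ) ‖ softmax(ℓ + η)) ] − (1/2) tr( H_soft(p) · Cov(η) ) | ≤ C · E[ ‖η‖_∞³ ]. -/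
open Finset Matrix MeasureTheory

/-- The softmax map: `softmax(ℓ)_v = exp(ℓ_v) / Σ_w exp(ℓ_w)`. -/
noncomputable def softmax {V : ℕ} (l : Fin V → ℝ) : Fin V → ℝ :=
  fun v => Real.exp (l v) / ∑ w, Real.exp (l w)

/-- KL divergence between two finite distributions, with the convention that terms
with `p_v = 0` contribute `0`. -/
noncomputable def KLdiv {V : ℕ} (p q : Fin V → ℝ) : ℝ :=
  ∑ v, if p v = 0 then 0 else p v * Real.log (p v / q v)

lemma sum_exp_pos {V : ℕ} (hV : 0 < V) (l : Fin V → ℝ) : 0 < ∑ w, Real.exp (l w) :=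
  Finset.sum_pos (fun w _ => Real.exp_pos _) ⟨⟨0, hV⟩, Finset.mem_univ _⟩

lemma softmax_pos {V : ℕ} (hV : 0 < V) (l : Fin V → ℝ) (v : Fin V) : 0 < softmax l v :=
  div_pos (Real.exp_pos _) (sum_exp_pos hV l)

lemma softmax_sum_one {V : ℕ} (hV : 0 < V) (l : Fin V → ℝ) : ∑ v, softmax l v = 1 := by
  simp only [softmax]
  rw [← Finset.sum_div, div_self (sum_exp_pos hV l).ne']

lemma kl_formula {V : ℕ} (hV : 0 < V) (l x : Fin V → ℝ) :
    KLdiv (softmax l) (softmax (l + x)) =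
      Real.log (∑ w, softmax l w * Real.exp (x w)) - ∑ v, softmax l v * x v := by
  have hZ := sum_exp_pos hV l
  have hZ' := sum_exp_pos hV (l + x)
  have hS : ∑ w, softmax l w * Real.exp (x w)
      = (∑ w, Real.exp ((l + x) w)) / (∑ w, Real.exp (l w)) := by
    rw [Finset.sum_div]
    refine Finset.sum_congr rfl fun w _ => ?_
    rw [softmax, Pi.add_apply, Real.exp_add]
    ring
  have hlog : ∀ v, softmax l v * Real.log (softmax l v / softmax (l + x) v)
      = softmax l v * (Real.log (∑ w, softmax l w * Real.exp (x w)) - x v) := by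
    intro v
    congr 1
    have hratio : softmax l v / softmax (l + x) v
        = (∑ w, Real.exp ((l + x) w)) / (∑ w, Real.exp (l w)) * Real.exp (-(x v)) := by
      rw [softmax, softmax, Pi.add_apply, Real.exp_add, Real.exp_neg]
      field_simp
    rw [hratio, Real.log_mul (by positivity) (Real.exp_pos _).ne', Real.log_exp, hS]
    ring
  rw [KLdiv]
  have h1 : ∀ v ∈ Finset.univ, (if softmax l v = 0 then (0:ℝ) else
      softmax l v * Real.log (softmax l v / softmax (l + x) v))
      = softmax l v * (Real.log (∑ w, softmax l w * Real.exp (x w)) - x v) := by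
    intro v _
    rw [if_neg (softmax_pos hV l v).ne', hlog v]
  rw [Finset.sum_congr rfl h1]
  simp only [mul_sub]
  rw [Finset.sum_sub_distrib, ← Finset.sum_mul, softmax_sum_one hV l, one_mul]

lemma exp_taylor3 (t : ℝ) (ht : |t| ≤ 1) : |Real.exp t - (1 + t + t^2/2)| ≤ |t|^3 := by
  have h := Real.exp_bound ht (n := 3) (by norm_num)
  have e1 : ∑ m ∈ range 3, t ^ m / m.factorial = 1 + t + t^2/2 := by
    norm_num [Finset.sum_range_succ]
  rw [e1] at h
  calc |Real.exp t - (1 + t + t^2/2)| ≤ |t|^3 * (4 / (6 * 3)) := by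
        convert h using 2 <;> norm_num [Nat.factorial]
    _ ≤ |t|^3 := by nlinarith [abs_nonneg t, pow_nonneg (abs_nonneg t) 3]

lemma log_taylor2 {S : ℝ} (h1 : Real.exp (-1) ≤ S) (h2 : S ≤ Real.exp 1) :
    |Real.log S - ((S-1) - (S-1)^2/2)| ≤ Real.exp 1 * |S-1|^3 := by
  set t := S - 1 with htdef
  have hS0 : (0:ℝ) < S := lt_of_lt_of_le (Real.exp_pos _) h1
  set g : ℝ → ℝ := fun s => Real.log (1+s) - s + s^2/2 with hg
  have key : ∀ s ∈ Set.uIcc (0:ℝ) t, HasDerivWithinAt g (s^2/(1+s)) (Set.uIcc 0 t) s := by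
    intro s hs
    have hpos : 0 < 1 + s := by
      rcases le_total 0 t with h | h
      · have := Set.uIcc_of_le h ▸ hs
        have : (0:ℝ) ≤ s := this.1
        linarith
      · have := Set.uIcc_of_ge h ▸ hs
        have ht' : t ≤ s := this.1
        have : Real.exp (-1) - 1 ≤ t := by simpa [htdef] using sub_le_sub_right h1 1
        nlinarith [Real.exp_pos (-1)]
    have : HasDerivAt g (1/(1+s) - 1 + s) s := by
      have h1' : HasDerivAt (fun s : ℝ => Real.log (1+s)) (1/(1+s)) s := by
        have := (Real.hasDerivAt_log (ne_of_gt hpos)).comp s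
          ((hasDerivAt_id s).const_add 1)
        simpa [one_div, Function.comp_def] using this
      have h2' := (h1'.sub (hasDerivAt_id s)).add ((hasDerivAt_pow 2 s).div_const 2)
      exact h2'.congr_deriv (by norm_num)
    have heq : 1/(1+s) - 1 + s = s^2/(1+s) := by field_simp; ring
    exact (heq ▸ this).hasDerivWithinAt
  have hC : ∀ s ∈ Set.uIcc (0:ℝ) t, ‖s^2/(1+s)‖ ≤ Real.exp 1 * t^2 := by
    intro s hs
    have hb : |s| ≤ |t| := by
      rcases le_total 0 t with h | h
      · have := Set.uIcc_of_le h ▸ hs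
        rw [abs_of_nonneg this.1, abs_of_nonneg h]; exact this.2
      · have := Set.uIcc_of_ge h ▸ hs
        rw [abs_of_nonpos this.2, abs_of_nonpos h]; linarith [this.1]
    have hpos : Real.exp (-1) ≤ 1 + s := by
      rcases le_total 0 t with h | h
      · have hm := Set.uIcc_of_le h ▸ hs
        have : (0:ℝ) ≤ s := hm.1
        have he : Real.exp (-1) ≤ 1 := by
          simpa using Real.exp_le_exp.2 (show (-1:ℝ) ≤ 0 by norm_num)
        linarith
      · have hm := Set.uIcc_of_ge h ▸ hs
        have : t ≤ s := hm.1
        have : Real.exp (-1) ≤ 1 + t := by simpa [htdef] using h1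
        linarith [(Set.uIcc_of_ge h ▸ hs).1]
    have hpos' : 0 < 1 + s := lt_of_lt_of_le (Real.exp_pos _) hpos
    rw [Real.norm_eq_abs, abs_div, abs_of_nonneg (sq_nonneg s), abs_of_pos hpos']
    have hee : Real.exp 1 * Real.exp (-1) = 1 := by
      rw [← Real.exp_add]; norm_num
    have h1' : s^2/(1+s) ≤ s^2 * Real.exp 1 := by
      rw [div_le_iff₀ hpos']
      nlinarith [sq_nonneg s, Real.exp_pos 1,
        mul_le_mul_of_nonneg_left hpos (Real.exp_pos 1).le]
    have hst : s^2 ≤ t^2 := by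
      nlinarith [sq_abs s, sq_abs t, mul_self_le_mul_self (abs_nonneg s) hb]
    calc s^2/(1+s) ≤ s^2 * Real.exp 1 := h1'
      _ ≤ Real.exp 1 * t^2 := by nlinarith [Real.exp_pos 1]
  have := Convex.norm_image_sub_le_of_norm_hasDerivWithin_le key hC
    (convex_uIcc 0 t) (Set.left_mem_uIcc) (Set.right_mem_uIcc)
  have hg0 : g 0 = 0 := by simp [hg]
  have hgt : g t = Real.log S - ((S-1) - (S-1)^2/2) := by
    simp only [hg, htdef]; ring_nf
  rw [hg0, hgt] at this
  have h2' : |Real.log S - ((S-1) - (S-1)^2/2)| ≤ Real.exp 1 * t^2 * |t| := by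
    simpa [Real.norm_eq_abs] using this
  calc |Real.log S - ((S-1) - (S-1)^2/2)| ≤ Real.exp 1 * t^2 * |t| := h2'
    _ = Real.exp 1 * |t|^3 := by rw [← sq_abs]; ring

lemma pointwise_bound {V : ℕ} (hV : 0 < V) (l x : Fin V → ℝ) (hx : ‖x‖ ≤ 1) :
    |KLdiv (softmax l) (softmax (l + x)) -
      (1/2) * ((∑ v, softmax l v * (x v)^2) - (∑ v, softmax l v * x v)^2)|
      ≤ 100 * ‖x‖^3 := by
  set p := softmax l with hp
  have hp0 : ∀ v, 0 < p v := softmax_pos hV l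
  have hp1 : ∑ v, p v = 1 := softmax_sum_one hV l
  set X := ‖x‖ with hXdef
  have hX0 : 0 ≤ X := norm_nonneg x
  have hX1 : X ≤ 1 := hx
  have hxv : ∀ v, |x v| ≤ X := fun v => by
    simpa [Real.norm_eq_abs] using norm_le_pi_norm x v
  set m := ∑ v, p v * x v with hm
  set s := ∑ v, p v * (x v)^2 with hs
  set S := ∑ v, p v * Real.exp (x v) with hS
  rw [kl_formula hV l x]
  have hXsq : X^2 ≤ X := by nlinarith
  have hXcb : X^3 ≤ X^2 := by nlinarith
  have hmb : |m| ≤ X := by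
    calc |m| ≤ ∑ v, |p v * x v| := Finset.abs_sum_le_sum_abs _ _
      _ ≤ ∑ v, p v * X := Finset.sum_le_sum fun v _ => by
          rw [abs_mul, abs_of_pos (hp0 v)]
          exact mul_le_mul_of_nonneg_left (hxv v) (hp0 v).le
      _ = X := by rw [← Finset.sum_mul, hp1, one_mul]
  have hsb0 : 0 ≤ s := Finset.sum_nonneg fun v _ => mul_nonneg (hp0 v).le (sq_nonneg _)
  have hsb : s ≤ X^2 := by
    calc s ≤ ∑ v, p v * X^2 := Finset.sum_le_sum fun v _ => by
          have : (x v)^2 ≤ X^2 := by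
            nlinarith [sq_abs (x v), hxv v, abs_nonneg (x v)]
          exact mul_le_mul_of_nonneg_left this (hp0 v).le
      _ = X^2 := by rw [← Finset.sum_mul, hp1, one_mul]
  have hd : |S - (1 + m + s/2)| ≤ X^3 := by
    have hrw : S - (1 + m + s/2)
        = ∑ v, p v * (Real.exp (x v) - (1 + x v + (x v)^2/2)) := by
      have e1 : ∑ v, p v * (Real.exp (x v) - (1 + x v + (x v)^2/2))
          = (∑ v, p v * Real.exp (x v)) - ((∑ v, p v) + (∑ v, p v * x v)
            + (∑ v, p v * (x v)^2)/2) := by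
        rw [Finset.sum_div, ← Finset.sum_add_distrib, ← Finset.sum_add_distrib,
          ← Finset.sum_sub_distrib]
        exact Finset.sum_congr rfl fun v _ => by ring
      rw [e1, hp1, ← hS, ← hm, ← hs]
    rw [hrw]
    calc |∑ v, p v * (Real.exp (x v) - (1 + x v + (x v)^2/2))|
        ≤ ∑ v, |p v * (Real.exp (x v) - (1 + x v + (x v)^2/2))| :=
          Finset.abs_sum_le_sum_abs _ _
      _ ≤ ∑ v, p v * X^3 := Finset.sum_le_sum fun v _ => by
          rw [abs_mul, abs_of_pos (hp0 v)]
          refine mul_le_mul_of_nonneg_left ?_ (hp0 v).le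
          calc |Real.exp (x v) - (1 + x v + (x v)^2/2)| ≤ |x v|^3 :=
                exp_taylor3 _ (le_trans (hxv v) hX1)
            _ ≤ X^3 := pow_le_pow_left₀ (abs_nonneg _) (hxv v) 3
      _ = X^3 := by rw [← Finset.sum_mul, hp1, one_mul]
  have hSlow : Real.exp (-1) ≤ S := by
    calc Real.exp (-1) = ∑ v, p v * Real.exp (-1) := by
          rw [← Finset.sum_mul, hp1, one_mul]
      _ ≤ S := Finset.sum_le_sum fun v _ => by
          refine mul_le_mul_of_nonneg_left (Real.exp_le_exp.2 ?_) (hp0 v).le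
          have := abs_le.mp (le_trans (hxv v) hX1)
          linarith [this.1]
  have hShigh : S ≤ Real.exp 1 := by
    calc S ≤ ∑ v, p v * Real.exp 1 := Finset.sum_le_sum fun v _ => by
          refine mul_le_mul_of_nonneg_left (Real.exp_le_exp.2 ?_) (hp0 v).le
          have := abs_le.mp (le_trans (hxv v) hX1)
          linarith [this.2]
      _ = Real.exp 1 := by rw [← Finset.sum_mul, hp1, one_mul]
  have hA := log_taylor2 hSlow hShigh
  have hub : |S - 1| ≤ (5/2) * X := by
    have : S - 1 = (S - (1 + m + s/2)) + m + s/2 := by ring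
    rw [this]
    have h1 := abs_le.mp hd
    have h2 := abs_le.mp hmb
    rw [abs_le]; constructor <;> linarith
  have hucube : |S - 1|^3 ≤ (125/8) * X^3 := by
    calc |S - 1|^3 ≤ ((5/2)*X)^3 := pow_le_pow_left₀ (abs_nonneg _) hub 3
      _ = (125/8) * X^3 := by ring
  have hexp3 : Real.exp 1 ≤ 3 := by
    have := Real.exp_one_lt_d9
    linarith
  have hA' : |Real.log S - ((S-1) - (S-1)^2/2)| ≤ 47 * X^3 := by
    calc |Real.log S - ((S-1) - (S-1)^2/2)| ≤ Real.exp 1 * |S-1|^3 := hA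
      _ ≤ 3 * ((125/8) * X^3) := by
          refine mul_le_mul hexp3 hucube (by positivity) (by norm_num)
      _ ≤ 47 * X^3 := by nlinarith [pow_nonneg hX0 3]
  have hid : (Real.log S - m) - (1/2)*(s - m^2)
      = (Real.log S - ((S-1) - (S-1)^2/2)) + (S - (1 + m + s/2))
        - (1/2)*((s/2 + (S - (1 + m + s/2)))*((S-1)+m)) := by ring
  have h3 : |s/2 + (S - (1 + m + s/2))| ≤ (3/2) * X^2 := by
    have h1 := abs_le.mp hd
    rw [abs_le]; constructor <;> linarith
  have h4 : |S - 1 + m| ≤ (7/2) * X := by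
    have h1 := abs_le.mp hub
    have h2 := abs_le.mp hmb
    rw [abs_le]; constructor <;> linarith
  have hprod : |(s/2 + (S - (1 + m + s/2)))*((S-1)+m)| ≤ (21/4) * X^3 := by
    rw [abs_mul]
    calc |s/2 + (S - (1 + m + s/2))| * |S - 1 + m|
        ≤ ((3/2) * X^2) * ((7/2) * X) :=
          mul_le_mul h3 h4 (abs_nonneg _) (by positivity)
      _ = (21/4) * X^3 := by ring
  rw [hid]
  have ha := abs_le.mp hA'
  have hb := abs_le.mp hd
  have hc := abs_le.mp hprod
  rw [abs_le]; constructor <;> linarith [pow_nonneg hX0 3]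

lemma Q_abs_le {V : ℕ} (hV : 0 < V) (l x : Fin V → ℝ) (hx : ‖x‖ ≤ 1) :
    |(∑ v, softmax l v * (x v)^2) - (∑ v, softmax l v * x v)^2| ≤ 2 := by
  have hp0 := softmax_pos hV l
  have hp1 := softmax_sum_one hV l
  have hxv : ∀ v, |x v| ≤ 1 := fun v =>
    le_trans (by simpa [Real.norm_eq_abs] using norm_le_pi_norm x v) hx
  have hmb : |∑ v, softmax l v * x v| ≤ 1 := by
    calc |∑ v, softmax l v * x v| ≤ ∑ v, |softmax l v * x v| :=
        Finset.abs_sum_le_sum_abs _ _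
      _ ≤ ∑ v, softmax l v * 1 := Finset.sum_le_sum fun v _ => by
          rw [abs_mul, abs_of_pos (hp0 v)]
          exact mul_le_mul_of_nonneg_left (hxv v) (hp0 v).le
      _ = 1 := by rw [← Finset.sum_mul, hp1, one_mul]
  have hsb0 : 0 ≤ ∑ v, softmax l v * (x v)^2 :=
    Finset.sum_nonneg fun v _ => mul_nonneg (hp0 v).le (sq_nonneg _)
  have hsb : ∑ v, softmax l v * (x v)^2 ≤ 1 := by
    calc ∑ v, softmax l v * (x v)^2 ≤ ∑ v, softmax l v * 1 :=
        Finset.sum_le_sum fun v _ => by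
          refine mul_le_mul_of_nonneg_left ?_ (hp0 v).le
          nlinarith [sq_abs (x v), hxv v, abs_nonneg (x v)]
      _ = 1 := by rw [← Finset.sum_mul, hp1, one_mul]
  have hm2 : (∑ v, softmax l v * x v)^2 ≤ 1 := by
    nlinarith [sq_abs (∑ v, softmax l v * x v), abs_nonneg (∑ v, softmax l v * x v)]
  have hm20 : 0 ≤ (∑ v, softmax l v * x v)^2 := sq_nonneg _
  rw [abs_le]; constructor <;> linarith

/-- There is an absolute constant `C > 0` such that for every `V ≥ 1`, `ℓ ∈ ℝ^V` with
`p = softmax(ℓ)`, and every mean-zero random vector `η` with `‖η‖_∞ ≤ 1` a.s.,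
`|E[KL(softmax(ℓ) ‖ softmax(ℓ + η))] - (1/2) tr(H_soft(p) · Cov(η))| ≤ C E[‖η‖_∞³]`,
where `‖·‖` is the sup norm on `Fin V → ℝ` and `Cov(η)_{vw} = E[η_v η_w]`. -/
theorem expected_kl_cumulant_expansion :
    ∃ C : ℝ, 0 < C ∧ ∀ (V : ℕ), 1 ≤ V →
      ∀ (Ω : Type) (_ : MeasurableSpace Ω) (μ : Measure Ω), IsProbabilityMeasure μ →
      ∀ (l : Fin V → ℝ) (η : Ω → Fin V → ℝ),
      (∀ v, Measurable fun ω => η ω v) →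
      (∀ v, ∫ ω, η ω v ∂μ = 0) →
      (∀ᵐ ω ∂μ, ‖η ω‖ ≤ 1) →
      |(∫ ω, KLdiv (softmax l) (softmax (l + η ω)) ∂μ)
          - (1 / 2) * Matrix.trace
              (Hsoft (softmax l) * Matrix.of fun v w => ∫ ω, η ω v * η ω w ∂μ)|
        ≤ C * ∫ ω, ‖η ω‖ ^ 3 ∂μ := by
  refine ⟨100, by norm_num, ?_⟩
  intro V hV Ω mΩ μ hμ l η hηm _hmean hbound
  haveI := hμ
  have hV' : 0 < V := hV
  set p := softmax l with hp
  have hmeasη : Measurable (fun ω => η ω) := measurable_pi_lambda _ hηm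
  have hmeasnorm : Measurable fun ω => ‖η ω‖ := continuous_norm.measurable.comp hmeasη
  have hint3 : Integrable (fun ω => ‖η ω‖^3) μ :=
    (integrable_const (1:ℝ)).mono' ((hmeasnorm.pow_const 3)).aestronglyMeasurable
      (hbound.mono fun ω h => by
        rw [Real.norm_eq_abs, abs_of_nonneg (by positivity)]
        exact pow_le_one₀ (norm_nonneg _) h)
  have hij : ∀ v w, Integrable (fun ω => η ω v * η ω w) μ := by
    intro v w
    refine (integrable_const (1:ℝ)).mono' ((hηm v).mul (hηm w)).aestronglyMeasurable
      (hbound.mono fun ω h => ?_)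
    rw [Real.norm_eq_abs, abs_mul]
    have hv : |η ω v| ≤ 1 :=
      le_trans (by simpa [Real.norm_eq_abs] using norm_le_pi_norm (η ω) v) h
    have hw : |η ω w| ≤ 1 :=
      le_trans (by simpa [Real.norm_eq_abs] using norm_le_pi_norm (η ω) w) h
    nlinarith [abs_nonneg (η ω v), abs_nonneg (η ω w)]
  -- G and its integrability
  have hGeq : (fun ω => (∑ v, p v * (η ω v)^2) - (∑ v, p v * η ω v)^2)
      = fun ω => (∑ v, p v * (η ω v * η ω v))
        - ∑ v, ∑ w, (p v * p w) * (η ω v * η ω w) := by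
    funext ω
    congr 1
    · exact Finset.sum_congr rfl fun v _ => by ring
    · rw [sq, Finset.sum_mul_sum]
      exact Finset.sum_congr rfl fun v _ => Finset.sum_congr rfl fun w _ => by ring
  have int1 : Integrable (fun ω => ∑ v, p v * (η ω v * η ω v)) μ :=
    integrable_finset_sum _ fun v _ => (hij v v).const_mul (p v)
  have int2 : Integrable (fun ω => ∑ v, ∑ w, (p v * p w) * (η ω v * η ω w)) μ :=
    integrable_finset_sum _ fun v _ =>
      integrable_finset_sum _ fun w _ => (hij v w).const_mul _
  have hGint : Integrable (fun ω => (∑ v, p v * (η ω v)^2) - (∑ v, p v * η ω v)^2) μ := by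
    rw [hGeq]; exact int1.sub int2
  have hintG : ∫ ω, ((∑ v, p v * (η ω v)^2) - (∑ v, p v * η ω v)^2) ∂μ
      = (∑ v, p v * ∫ ω, η ω v * η ω v ∂μ)
        - ∑ v, ∑ w, (p v * p w) * ∫ ω, η ω v * η ω w ∂μ := by
    rw [hGeq, integral_sub int1 int2,
      integral_finset_sum _ (fun v _ => (hij v v).const_mul (p v)),
      integral_finset_sum _ (fun v _ =>
        integrable_finset_sum _ fun w _ => (hij v w).const_mul _)]
    congr 1
    · exact Finset.sum_congr rfl fun v _ => integral_const_mul _ _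
    · refine Finset.sum_congr rfl fun v _ => ?_
      rw [integral_finset_sum _ (fun w _ => (hij v w).const_mul _)]
      exact Finset.sum_congr rfl fun w _ => integral_const_mul _ _
  -- trace computation
  have hsymm : ∀ v w : Fin V, (∫ ω, η ω w * η ω v ∂μ) = ∫ ω, η ω v * η ω w ∂μ := by
    intro v w
    congr 1
    funext ω
    exact mul_comm _ _
  have htr : Matrix.trace (Hsoft p * Matrix.of fun v w => ∫ ω, η ω v * η ω w ∂μ)
      = (∑ v, p v * ∫ ω, η ω v * η ω v ∂μ)
        - ∑ v, ∑ w, (p v * p w) * ∫ ω, η ω v * η ω w ∂μ := by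
    simp only [Matrix.trace, Matrix.diag, Matrix.mul_apply, Hsoft, Matrix.sub_apply,
      Matrix.diagonal_apply, Matrix.vecMulVec_apply, Matrix.of_apply, sub_mul,
      Finset.sum_sub_distrib]
    congr 1
    · refine Finset.sum_congr rfl fun v _ => ?_
      simp only [ite_mul, zero_mul, Finset.sum_ite_eq, Finset.mem_univ, if_true]
    · refine Finset.sum_congr rfl fun v _ => Finset.sum_congr rfl fun w _ => ?_
      rw [hsymm v w]
  -- F facts
  have hFeq : (fun ω => KLdiv p (softmax (l + η ω)))
      = fun ω => Real.log (∑ w, p w * Real.exp (η ω w)) - ∑ v, p v * η ω v :=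
    funext fun ω => kl_formula hV' l (η ω)
  have hFmeas : Measurable fun ω => KLdiv p (softmax (l + η ω)) := by
    rw [hFeq]
    exact (Real.measurable_log.comp
        (Finset.measurable_sum _ fun w _ =>
          (Real.measurable_exp.comp (hηm w)).const_mul (p w))).sub
      (Finset.measurable_sum _ fun v _ => (hηm v).const_mul (p v))
  have key : ∀ᵐ ω ∂μ, |KLdiv p (softmax (l + η ω))
      - (1/2) * ((∑ v, p v * (η ω v)^2) - (∑ v, p v * η ω v)^2)| ≤ 100 * ‖η ω‖^3 :=
    hbound.mono fun ω h => pointwise_bound hV' l (η ω) h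
  have hFbound : ∀ᵐ ω ∂μ, ‖KLdiv p (softmax (l + η ω))‖ ≤ 102 := by
    filter_upwards [hbound, key] with ω h hk
    have h2 := Q_abs_le hV' l (η ω) h
    have h3 : ‖η ω‖^3 ≤ 1 := pow_le_one₀ (norm_nonneg _) h
    rw [Real.norm_eq_abs]
    have h4 := abs_le.mp hk
    have h5 := abs_le.mp h2
    rw [abs_le]; constructor <;> nlinarith
  have hFint : Integrable (fun ω => KLdiv p (softmax (l + η ω))) μ :=
    (integrable_const (102:ℝ)).mono' hFmeas.aestronglyMeasurable hFbound
  -- combine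
  rw [htr, ← hintG]
  have hstep : (∫ ω, KLdiv p (softmax (l + η ω)) ∂μ)
      - 1/2 * ∫ ω, ((∑ v, p v * (η ω v)^2) - (∑ v, p v * η ω v)^2) ∂μ
      = ∫ ω, (KLdiv p (softmax (l + η ω))
        - (1/2) * ((∑ v, p v * (η ω v)^2) - (∑ v, p v * η ω v)^2)) ∂μ := by
    rw [integral_sub hFint (hGint.const_mul _), integral_const_mul]
  rw [show (1:ℝ)/2 * ∫ ω, ((∑ v, p v * (η ω v)^2) - (∑ v, p v * η ω v)^2) ∂μ
      = 1/2 * ∫ ω, ((∑ v, p v * (η ω v)^2) - (∑ v, p v * η ω v)^2) ∂μ from rfl]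
  rw [hstep]
  calc |∫ ω, (KLdiv p (softmax (l + η ω))
        - (1/2) * ((∑ v, p v * (η ω v)^2) - (∑ v, p v * η ω v)^2)) ∂μ|
      ≤ ∫ ω, |KLdiv p (softmax (l + η ω))
        - (1/2) * ((∑ v, p v * (η ω v)^2) - (∑ v, p v * η ω v)^2)| ∂μ :=
        by
          exact
            norm_integral_le_integral_norm (μ := μ) (f := fun ω =>
              KLdiv p (softmax (l + η ω))
                - (1/2) * ((∑ v, p v * (η ω v)^2) - (∑ v, p v * η ω v)^2))
    _ ≤ ∫ ω, 100 * ‖η ω‖^3 ∂μ :=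
        integral_mono_ae ((hFint.sub (hGint.const_mul _)).abs) (hint3.const_mul 100) key
    _ = 100 * ∫ ω, ‖η ω‖^3 ∂μ := integral_const_mul _ _
end
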